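/- arXiv:2602.11553 — 3 statements merged into one kernel-verified Lean document; each statement's English description precedes it below -/
import Mathlib

section
/- Let e, d be vectors in R^n and t₁, t₂ ≥ 0 be reals such that ‖e‖² ≤ ‖d‖² + 2t₁‖e‖ + 2t₂‖d‖ and t₁ ≥ t₂. Then ‖e‖ ≤ ‖d‖ + t₁ + t₂ + √(t₁² − t₂²). -/
/-- If `‖e‖² ≤ ‖d‖² + 2t₁‖e‖ + 2t₂‖d‖` with `0 ≤ t₂ ≤ t₁`, then
`‖e‖ ≤ ‖d‖ + t₁ + t₂ + √(t₁² − t₂²)`. -/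
theorem stmt1 {n : ℕ} (e d : EuclideanSpace ℝ (Fin n)) (t₁ t₂ : ℝ)
    (ht₂ : 0 ≤ t₂) (ht : t₂ ≤ t₁)
    (h : ‖e‖ ^ 2 ≤ ‖d‖ ^ 2 + 2 * t₁ * ‖e‖ + 2 * t₂ * ‖d‖) :
    ‖e‖ ≤ ‖d‖ + t₁ + t₂ + Real.sqrt (t₁ ^ 2 - t₂ ^ 2) := by
  have h1 : t₂ ^ 2 ≤ t₁ ^ 2 := by nlinarith
  have hs : Real.sqrt (t₁ ^ 2 - t₂ ^ 2) ^ 2 = t₁ ^ 2 - t₂ ^ 2 :=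
    Real.sq_sqrt (by linarith)
  have hsn := Real.sqrt_nonneg (t₁ ^ 2 - t₂ ^ 2)
  nlinarith [norm_nonneg d, norm_nonneg e,
    sq_nonneg (‖d‖ + t₂ + Real.sqrt (t₁ ^ 2 - t₂ ^ 2) + t₁ - ‖e‖),
    mul_nonneg (add_nonneg (norm_nonneg d) ht₂) hsn]
end

section
/- Let c_m, c_v ∈ R^n with c_m ≠ c_v, d ∈ R^n, and N ~ N(0, σ²I_n). Then the probability that ‖(N − d) + c_m − c_v‖ < ‖N − d‖ equals Q((‖c_m − c_v‖/2 + ⟨d, (c_v − c_m)/‖c_v − c_m‖⟩)/σ). -/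
/-!
With `w = c_v − c_m`, expanding `‖y − w‖² < ‖y‖²` for `y = N − d` turns the event into the
half-space `⟨w, N⟩ > ⟨w, d⟩ + ‖w‖² / 2`. The coordinates of `N` are independent centred Gaussians,
so `⟨w, N⟩` is a centred Gaussian with standard deviation `‖w‖ σ`, and the probability of the
half-space is the standard Gaussian tail at the threshold divided by `‖w‖ σ`.
-/

open MeasureTheory ProbabilityTheory

/-- The standard Gaussian tail function `Q(h) = ∫_h^∞ (1/√(2π)) e^{−x²/2} dx`. -/
noncomputable def gaussQ (h : ℝ) : ℝ :=
  ∫ x in Set.Ioi h, (Real.sqrt (2 * Real.pi))⁻¹ * Real.exp (-x ^ 2 / 2)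

open scoped NNReal

lemma gaussianReal_zero_one_Ioi (h : ℝ) :
    gaussianReal 0 1 (Set.Ioi h) = ENNReal.ofReal (gaussQ h) := by
  rw [gaussianReal_apply_eq_integral 0 one_ne_zero, gaussQ]
  simp [gaussianPDFReal]

lemma gaussianReal_zero_one_map_affine (m : ℝ) (v : ℝ≥0) :
    (gaussianReal 0 1).map (fun x => m + √v * x) = gaussianReal m v := by
  change (gaussianReal 0 1).map ((m + ·) ∘ (√v * ·)) = _
  rw [← Measure.map_map (measurable_const_add m) (measurable_const_mul _),
    gaussianReal_map_const_mul, gaussianReal_map_const_add]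
  simp

lemma gaussianReal_Ioi {m : ℝ} {v : ℝ≥0} (hv : v ≠ 0) (t : ℝ) :
    gaussianReal m v (Set.Ioi t) = ENNReal.ofReal (gaussQ ((t - m) / √v)) := by
  have hsqrt : 0 < √(v : ℝ) := by positivity
  have hpre : (fun x => m + √v * x) ⁻¹' Set.Ioi t = Set.Ioi ((t - m) / √v) := by
    ext x
    simp only [Set.mem_preimage, Set.mem_Ioi, div_lt_iff₀ hsqrt]
    constructor <;> intro h <;> linarith
  rw [← gaussianReal_zero_one_map_affine, Measure.map_apply (by fun_prop) measurableSet_Ioi,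
    hpre, gaussianReal_zero_one_Ioi]

section

variable {ι : Type*} [Fintype ι]

lemma hasGaussianLaw_sum_mul_pi (u m : ι → ℝ) (v : ι → ℝ≥0) :
    HasGaussianLaw (fun x : ι → ℝ => ∑ i, u i * x i)
      (Measure.pi fun i => gaussianReal (m i) (v i)) :=
  iIndepFun.hasGaussianLaw_fun_sum (X := fun i (x : ι → ℝ) => u i * x i)
    (fun i => ((measurePreserving_eval _ i).hasLaw.hasGaussianLaw).fun_smul (u i))
    (iIndepFun_pi (X := fun i (y : ℝ) => u i * y) fun _ => by fun_prop)

lemma map_sum_mul_pi_gaussianReal (u m : ι → ℝ) (v : ι → ℝ≥0) :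
    (Measure.pi fun i => gaussianReal (m i) (v i)).map (fun x => ∑ i, u i * x i)
      = gaussianReal (∑ i, u i * m i) (∑ i, (u i ^ 2).toNNReal * v i) := by
  rw [(hasGaussianLaw_sum_mul_pi u m v).map_eq_gaussianReal]
  have hmem : ∀ i, MemLp (fun y : ℝ => u i * y) 2 (gaussianReal (m i) (v i)) :=
    fun i => (memLp_id_gaussianReal 2).const_mul (u i)
  congr
  · rw [integral_finsetSum _ fun i _ => integrable_comp_eval ((hmem i).integrable one_le_two)]
    refine Finset.sum_congr rfl fun i _ => ?_
    rw [integral_comp_eval (hmem i).1, integral_const_mul, integral_id_gaussianReal]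
  · have hvar : ∀ i, Var[fun y => u i * y; gaussianReal (m i) (v i)] = u i ^ 2 * v i :=
      fun i => by rw [variance_const_mul (u i) (fun y => y), variance_fun_id_gaussianReal]
    have hsum := variance_sum_pi hmem
    rw [Finset.sum_fn] at hsum
    ext
    rw [Real.coe_toNNReal _ (variance_nonneg _ _), hsum]
    push_cast
    simp [hvar, sq_nonneg]

lemma map_sum_mul_pi_gaussianReal_zero (u : ι → ℝ) (v : ℝ≥0) :
    (Measure.pi fun _ : ι => gaussianReal 0 v).map (fun x => ∑ i, u i * x i)
      = gaussianReal 0 ((∑ i, u i ^ 2).toNNReal * v) := by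
  rw [map_sum_mul_pi_gaussianReal u (fun _ => 0),
    Real.toNNReal_sum_of_nonneg fun i _ => sq_nonneg (u i), Finset.sum_mul]
  simp

lemma sqrt_sum_sub_sq_lt_sqrt_sum_sq_iff (y w : ι → ℝ) :
    √(∑ i, (y i - w i) ^ 2) < √(∑ i, y i ^ 2) ↔ (∑ i, w i ^ 2) / 2 < ∑ i, w i * y i := by
  have hexpand : ∑ i, (y i - w i) ^ 2 = ∑ i, y i ^ 2 - 2 * ∑ i, w i * y i + ∑ i, w i ^ 2 := by
    rw [Finset.mul_sum, ← Finset.sum_sub_distrib, ← Finset.sum_add_distrib]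
    exact Finset.sum_congr rfl fun i _ => by ring
  rw [Real.sqrt_lt_sqrt_iff (Finset.sum_nonneg fun i _ => sq_nonneg _), hexpand]
  constructor <;> intro h <;> linarith

lemma sqrt_sum_sq_add_sub_lt_iff (x d a b : ι → ℝ) :
    √(∑ i, ((x i - d i) + a i - b i) ^ 2) < √(∑ i, (x i - d i) ^ 2) ↔
      ∑ i, (b i - a i) * d i + (∑ i, (b i - a i) ^ 2) / 2 < ∑ i, (b i - a i) * x i := by
  have hshift : ∀ i, (x i - d i) + a i - b i = (x i - d i) - (b i - a i) := fun i => by ring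
  simp only [hshift, sqrt_sum_sub_sq_lt_sqrt_sum_sq_iff, mul_sub, Finset.sum_sub_distrib]
  constructor <;> intro h <;> linarith

lemma sum_mul_add_half_sum_sq_div_sqrt_mul (w d : ι → ℝ) (σ : ℝ) (hw : 0 < ∑ i, w i ^ 2) :
    (∑ i, w i * d i + (∑ i, w i ^ 2) / 2) / (√(∑ i, w i ^ 2) * σ)
      = (√(∑ i, w i ^ 2) / 2 + ∑ i, d i * (w i / √(∑ j, w j ^ 2))) / σ := by
  have hr : 0 < √(∑ i, w i ^ 2) := Real.sqrt_pos.mpr hw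
  have hproj : ∑ i, d i * (w i / √(∑ j, w j ^ 2)) = (∑ i, w i * d i) / √(∑ j, w j ^ 2) := by
    rw [Finset.sum_div]
    exact Finset.sum_congr rfl fun i _ => by ring
  rw [hproj, div_mul_eq_div_div]
  congr 1
  field_simp
  rw [Real.sq_sqrt hw.le]
  ring

end

theorem stmt11_general {Ω : Type*} [MeasurableSpace Ω] (P : Measure Ω)
    {n : ℕ} (σ : ℝ) (hσ : 0 < σ) (N : Ω → Fin n → ℝ) (hNmeas : Measurable N)
    (hN : Measure.map N P = Measure.pi fun _ : Fin n => gaussianReal 0 (σ ^ 2).toNNReal)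
    (cm cv d : Fin n → ℝ) (hne : cm ≠ cv) :
    P {ω | Real.sqrt (∑ i, ((N ω i - d i) + cm i - cv i) ^ 2)
            < Real.sqrt (∑ i, (N ω i - d i) ^ 2)}
      = ENNReal.ofReal (gaussQ ((Real.sqrt (∑ i, (cm i - cv i) ^ 2) / 2
          + ∑ i, d i * ((cv i - cm i) / Real.sqrt (∑ j, (cv j - cm j) ^ 2))) / σ)) := by
  set w : Fin n → ℝ := fun i => cv i - cm i
  have hw : 0 < ∑ i, w i ^ 2 := by
    obtain ⟨i, hi⟩ := Function.ne_iff.mp hne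
    exact Finset.sum_pos' (fun i _ => sq_nonneg _)
      ⟨i, Finset.mem_univ _, sq_pos_of_ne_zero (sub_ne_zero.mpr hi.symm)⟩
  have hevent : {ω | Real.sqrt (∑ i, ((N ω i - d i) + cm i - cv i) ^ 2)
      < Real.sqrt (∑ i, (N ω i - d i) ^ 2)}
      = (fun ω => ∑ i, w i * N ω i) ⁻¹' Set.Ioi (∑ i, w i * d i + (∑ i, w i ^ 2) / 2) := by
    ext ω
    exact sqrt_sum_sq_add_sub_lt_iff (N ω) d cm cv
  have hlaw : P.map (fun ω => ∑ i, w i * N ω i)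
      = gaussianReal 0 ((∑ i, w i ^ 2).toNNReal * (σ ^ 2).toNNReal) := by
    change P.map ((fun x => ∑ i, w i * x i) ∘ N) = _
    rw [← Measure.map_map (by fun_prop) hNmeas, hN, map_sum_mul_pi_gaussianReal_zero]
  have hv : (∑ i, w i ^ 2).toNNReal * (σ ^ 2).toNNReal ≠ 0 := by positivity
  rw [hevent, ← Measure.map_apply (by fun_prop) measurableSet_Ioi, hlaw, gaussianReal_Ioi hv]
  have hsqrt : √(↑((∑ i, w i ^ 2).toNNReal * (σ ^ 2).toNNReal) : ℝ) = √(∑ i, w i ^ 2) * σ := by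
    rw [NNReal.coe_mul, Real.coe_toNNReal _ hw.le, Real.coe_toNNReal _ (sq_nonneg σ),
      Real.sqrt_mul hw.le, Real.sqrt_sq hσ.le]
  have hcm : ∑ i, (cm i - cv i) ^ 2 = ∑ i, w i ^ 2 := Finset.sum_congr rfl fun i _ => by ring
  rw [hsqrt, hcm, sub_zero, sum_mul_add_half_sum_sq_div_sqrt_mul w d σ hw]

/-- For distinct codewords `c_m ≠ c_v`, fixed `d`, and `N ~ N(0, σ²Iₙ)`,
`P(‖(N − d) + c_m − c_v‖ < ‖N − d‖)
  = Q((‖c_m − c_v‖/2 + ⟨d, (c_v − c_m)/‖c_v − c_m‖⟩)/σ)`. -/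
theorem stmt11 {Ω : Type*} [MeasurableSpace Ω] (P : Measure Ω) [IsProbabilityMeasure P]
    {n : ℕ} (σ : ℝ) (hσ : 0 < σ) (N : Ω → Fin n → ℝ) (hNmeas : Measurable N)
    (hN : Measure.map N P = Measure.pi fun _ : Fin n => gaussianReal 0 (σ ^ 2).toNNReal)
    (cm cv d : Fin n → ℝ) (hne : cm ≠ cv) :
    P {ω | Real.sqrt (∑ i, ((N ω i - d i) + cm i - cv i) ^ 2)
            < Real.sqrt (∑ i, (N ω i - d i) ^ 2)}
      = ENNReal.ofReal (gaussQ ((Real.sqrt (∑ i, (cm i - cv i) ^ 2) / 2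
          + ∑ i, d i * ((cv i - cm i) / Real.sqrt (∑ j, (cv j - cm j) ^ 2))) / σ)) :=
  stmt11_general P σ hσ N hNmeas hN cm cv d hne
end

section
/- Under the hypotheses of the compression-based ML denoiser theorem, with probability at least 1 − 2^{−ηR+2}, √(D(P)) ≤ ‖x − x̂‖ ≤ √(D(P)) + 2σ√((2 ln 2)R)(1 + 2√η), where D(P) = ‖x̃ − x‖² is the distortion of the codebook on the clean signal. -/
/-!
Comparing `‖x̂ - (x + z)‖ ≤ ‖x̃ - (x + z)‖`, where `z` is the noise, gives
`‖x - x̂‖² ≤ ‖x - x̃‖² + 2⟪x̂ - x̃, z⟫`. On the event that for every codeword `c` the projection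
of `z` onto the unit vector along `c - x̃` is at most `t`, this together with
`‖x̂ - x̃‖ ≤ ‖x - x̂‖ + ‖x - x̃‖` forces `‖x - x̂‖ ≤ ‖x - x̃‖ + 2t`. Each such projection is
sub-Gaussian with variance proxy `σ²`, so a union bound over the at most `2^R` codewords with
`t = σ √(2 ln 2 · R(1 + η))` leaves a failure probability of at most `2^(-ηR)`.
-/

open MeasureTheory ProbabilityTheory
open scoped NNReal ENNReal RealInnerProductSpace

lemma ProbabilityTheory.HasSubgaussianMGF.mono {Ω : Type*} [MeasurableSpace Ω] {μ : Measure Ω}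
    {X : Ω → ℝ} {c c' : ℝ≥0} (h : HasSubgaussianMGF X c μ) (hc : c ≤ c') :
    HasSubgaussianMGF X c' μ where
  integrable_exp_mul := h.integrable_exp_mul
  mgf_le t := (h.mgf_le t).trans (Real.exp_le_exp.2 (by gcongr))

lemma ProbabilityTheory.hasSubgaussianMGF_id_gaussianReal (v : ℝ≥0) :
    HasSubgaussianMGF id v (gaussianReal 0 v) where
  integrable_exp_mul := integrable_exp_mul_gaussianReal
  mgf_le t := by simp [mgf_id_gaussianReal]

section GaussianVector

variable {ι : Type*} [Fintype ι] (v : ℝ≥0)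

lemma hasSubgaussianMGF_inner_pi_gaussianReal (u : EuclideanSpace ℝ ι) :
    HasSubgaussianMGF (fun z : ι → ℝ ↦ ⟪u, WithLp.toLp 2 z⟫) (‖u‖₊ ^ 2 * v)
      (Measure.pi fun _ : ι ↦ gaussianReal 0 v) := by
  have hcoord (i : ι) : HasSubgaussianMGF (fun z : ι → ℝ ↦ z i) v
      (Measure.pi fun _ : ι ↦ gaussianReal 0 v) := by
    have h := hasSubgaussianMGF_id_gaussianReal v
    rw [← (measurePreserving_eval (fun _ : ι ↦ gaussianReal 0 v) i).map_eq] at h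
    exact (HasSubgaussianMGF.id_map_iff (measurable_pi_apply i).aemeasurable).1 h
  have hindep : iIndepFun (fun i (z : ι → ℝ) ↦ u i * z i)
      (Measure.pi fun _ : ι ↦ gaussianReal 0 v) :=
    iIndepFun_pi (X := fun i x ↦ u i * x) fun i ↦ by fun_prop
  have hsum := HasSubgaussianMGF.sum_of_iIndepFun hindep (s := Finset.univ)
    fun i _ ↦ (hcoord i).const_mul (u i)
  convert hsum using 1
  · ext z
    simp [PiLp.inner_apply, mul_comm]
  · ext
    simp only [NNReal.coe_mul, NNReal.coe_pow, coe_nnnorm, EuclideanSpace.norm_sq_eq,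
      Real.norm_eq_abs, sq_abs, Finset.sum_mul, NNReal.coe_sum]
    rfl

lemma pi_gaussianReal_real_inner_ge_le {u : EuclideanSpace ℝ ι} (hu : ‖u‖ ≤ 1) {t : ℝ}
    (ht : 0 ≤ t) :
    (Measure.pi fun _ : ι ↦ gaussianReal 0 v).real {z | t ≤ ⟪u, WithLp.toLp 2 z⟫}
      ≤ Real.exp (-t ^ 2 / (2 * v)) := by
  have hu' : ‖u‖₊ ≤ 1 := by simpa [← NNReal.coe_le_coe] using hu
  have hc : ‖u‖₊ ^ 2 * v ≤ v := mul_le_of_le_one_left v.2 (pow_le_one₀ (by positivity) hu')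
  exact ((hasSubgaussianMGF_inner_pi_gaussianReal v u).mono hc).measure_ge_le ht

lemma measure_exists_inner_gt_mul_norm_le {Ω : Type*} [MeasurableSpace Ω] {P : Measure Ω}
    {N : Ω → ι → ℝ} (hN : Measurable N)
    (hlaw : P.map N = Measure.pi fun _ : ι ↦ gaussianReal 0 v) {α : Type*} (s : Finset α)
    (w : α → EuclideanSpace ℝ ι) {t : ℝ} (ht : 0 ≤ t) :
    P {ω | ∃ a ∈ s, t * ‖w a‖ < ⟪w a, WithLp.toLp 2 (N ω)⟫}
      ≤ s.card * ENNReal.ofReal (Real.exp (-t ^ 2 / (2 * v))) := by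
  set E : α → Set (ι → ℝ) := fun a ↦ {z | t ≤ ⟪‖w a‖⁻¹ • w a, WithLp.toLp 2 z⟫}
  have hsub : {ω | ∃ a ∈ s, t * ‖w a‖ < ⟪w a, WithLp.toLp 2 (N ω)⟫} ⊆ ⋃ a ∈ s, N ⁻¹' E a := by
    rintro ω ⟨a, ha, hlt⟩
    refine Set.mem_biUnion ha ?_
    have hw : 0 < ‖w a‖ := norm_pos_iff.2 fun h ↦ by simp [h] at hlt
    simp only [E, Set.mem_preimage, Set.mem_ofPred_eq, real_inner_smul_left]
    rw [le_inv_mul_iff₀ hw, mul_comm]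
    exact hlt.le
  have hE (a : α) : P (N ⁻¹' E a) ≤ ENNReal.ofReal (Real.exp (-t ^ 2 / (2 * v))) := by
    have hu : ‖‖w a‖⁻¹ • w a‖ ≤ 1 := by
      rw [norm_smul, norm_inv, norm_norm]
      exact inv_mul_le_one_of_le₀ le_rfl (norm_nonneg _)
    calc P (N ⁻¹' E a) ≤ P.map N (E a) := Measure.le_map_apply hN.aemeasurable _
      _ = ENNReal.ofReal ((P.map N).real (E a)) := (ofReal_measureReal (by simp [hlaw])).symm
      _ ≤ _ := by
        rw [hlaw]
        exact ENNReal.ofReal_le_ofReal (pi_gaussianReal_real_inner_ge_le v hu ht)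
  calc _ ≤ P (⋃ a ∈ s, N ⁻¹' E a) := measure_mono hsub
    _ ≤ ∑ a ∈ s, P (N ⁻¹' E a) := measure_biUnion_finset_le _ _
    _ ≤ ∑ _a ∈ s, ENNReal.ofReal (Real.exp (-t ^ 2 / (2 * v))) := Finset.sum_le_sum fun a _ ↦ hE a
    _ = _ := by rw [Finset.sum_const, nsmul_eq_mul]

end GaussianVector

lemma norm_sub_le_add_two_mul_of_inner_le {E : Type*} [NormedAddCommGroup E]
    [InnerProductSpace ℝ E] {x z xhat xtil : E} {t : ℝ} (ht : 0 ≤ t)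
    (hhat : ‖xhat - (x + z)‖ ≤ ‖xtil - (x + z)‖) (hz : ⟪xhat - xtil, z⟫ ≤ t * ‖xhat - xtil‖) :
    ‖x - xhat‖ ≤ ‖x - xtil‖ + 2 * t := by
  rw [norm_sub_rev x, norm_sub_rev x]
  have hsq : ‖xhat - x‖ ^ 2 ≤ ‖xtil - x‖ ^ 2 + 2 * ⟪xhat - xtil, z⟫ := by
    have h := pow_le_pow_left₀ (norm_nonneg _) hhat 2
    rw [show xhat - (x + z) = (xhat - x) - z by abel, show xtil - (x + z) = (xtil - x) - z by abel,
      norm_sub_sq_real (xhat - x), norm_sub_sq_real (xtil - x)] at h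
    have hinner : ⟪xhat - xtil, z⟫ = ⟪xhat - x, z⟫ - ⟪xtil - x, z⟫ := by
      rw [← inner_sub_left, sub_sub_sub_cancel_right]
    linarith
  have htri : ‖xhat - xtil‖ ≤ ‖xhat - x‖ + ‖xtil - x‖ := by
    simpa [norm_sub_rev x] using norm_sub_le_norm_sub_add_norm_sub xhat x xtil
  nlinarith [norm_nonneg (xhat - x), norm_nonneg (xtil - x), mul_le_mul_of_nonneg_left htri ht]

lemma sqrt_sum_sub_sq_eq_norm_toLp {ι : Type*} [Fintype ι] (a b : ι → ℝ) :
    √(∑ i, (a i - b i) ^ 2) = ‖WithLp.toLp 2 a - WithLp.toLp 2 b‖ := by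
  simp [EuclideanSpace.norm_eq]

lemma sqrt_sum_sub_sq_le_add_two_mul_of_inner_le {ι : Type*} [Fintype ι] {x z xhat xtil : ι → ℝ}
    {t : ℝ} (ht : 0 ≤ t)
    (hhat : ∑ i, (xhat i - (x i + z i)) ^ 2 ≤ ∑ i, (xtil i - (x i + z i)) ^ 2)
    (hz : ⟪WithLp.toLp 2 (xhat - xtil), WithLp.toLp 2 z⟫ ≤ t * ‖WithLp.toLp 2 (xhat - xtil)‖) :
    √(∑ i, (x i - xhat i) ^ 2) ≤ √(∑ i, (xtil i - x i) ^ 2) + 2 * t := by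
  have hhat' : ‖WithLp.toLp 2 xhat - (WithLp.toLp 2 x + WithLp.toLp 2 z)‖
      ≤ ‖WithLp.toLp 2 xtil - (WithLp.toLp 2 x + WithLp.toLp 2 z)‖ := by
    rw [← WithLp.toLp_add, ← sqrt_sum_sub_sq_eq_norm_toLp, ← sqrt_sum_sub_sq_eq_norm_toLp]
    exact Real.sqrt_le_sqrt hhat
  rw [WithLp.toLp_sub] at hz
  rw [sqrt_sum_sub_sq_eq_norm_toLp, sqrt_sum_sub_sq_eq_norm_toLp, norm_sub_rev (WithLp.toLp 2 xtil)]
  exact norm_sub_le_add_two_mul_of_inner_le ht hhat' hz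

lemma exp_neg_sq_div_eq_two_rpow_neg {σ a : ℝ} (hσ : σ ≠ 0) (ha : 0 ≤ a) :
    Real.exp (-(σ * √(2 * Real.log 2 * a)) ^ 2 / (2 * σ ^ 2)) = 2 ^ (-a) := by
  rw [Real.rpow_def_of_pos two_pos, mul_pow, Real.sq_sqrt (by positivity)]
  field_simp

lemma measure_exists_inner_gt_le_two_rpow_neg {ι Ω α : Type*} [Fintype ι] [MeasurableSpace Ω]
    {P : Measure Ω} {N : Ω → ι → ℝ} (hN : Measurable N) {σ : ℝ}
    (hlaw : P.map N = Measure.pi fun _ : ι ↦ gaussianReal 0 (σ ^ 2).toNNReal) (s : Finset α)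
    (w : α → EuclideanSpace ℝ ι) {R b : ℝ} (hcard : (s.card : ℝ) ≤ 2 ^ R) (hσ : 0 < σ)
    (hR : 0 ≤ R) (hb : 0 ≤ b) :
    P {ω | ∃ a ∈ s, σ * √(2 * Real.log 2 * (R + b)) * ‖w a‖ < ⟪w a, WithLp.toLp 2 (N ω)⟫}
      ≤ ENNReal.ofReal (2 ^ (-b)) := by
  refine (measure_exists_inner_gt_mul_norm_le _ hN hlaw s w (by positivity)).trans ?_
  rw [Real.coe_toNNReal _ (sq_nonneg σ), exp_neg_sq_div_eq_two_rpow_neg hσ.ne' (by positivity),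
    ← ENNReal.ofReal_natCast, ← ENNReal.ofReal_mul (by positivity)]
  refine ENNReal.ofReal_le_ofReal ?_
  calc (s.card : ℝ) * 2 ^ (-(R + b)) ≤ 2 ^ R * 2 ^ (-(R + b)) := by gcongr
    _ = 2 ^ (-b) := by rw [← Real.rpow_add two_pos]; ring_nf

lemma sqrt_mul_one_add_le {a η : ℝ} (hη : 0 ≤ η) : √(a * (1 + η)) ≤ √a * (1 + 2 * √η) := by
  have h : √(1 + η) ≤ 1 + 2 * √η :=
    Real.sqrt_le_iff.2 ⟨by positivity, by nlinarith [Real.sq_sqrt hη, Real.sqrt_nonneg η]⟩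
  rw [Real.sqrt_mul' _ (by positivity)]
  gcongr

lemma ofReal_one_sub_le_of_measure_compl_le {Ω : Type*} [MeasurableSpace Ω] {P : Measure Ω}
    [IsProbabilityMeasure P] {S : Set Ω} {a : ℝ} (ha : 0 ≤ a) (h : P Sᶜ ≤ ENNReal.ofReal a) :
    ENNReal.ofReal (1 - a) ≤ P S := by
  rw [ENNReal.ofReal_sub _ ha, ENNReal.ofReal_one, tsub_le_iff_right]
  calc 1 = P (S ∪ Sᶜ) := by simp
    _ ≤ P S + P Sᶜ := measure_union_le _ _
    _ ≤ P S + ENNReal.ofReal a := by gcongr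

theorem stmt16_general {Ω : Type*} [MeasurableSpace Ω] (P : Measure Ω) [IsProbabilityMeasure P]
    {n : ℕ} (σ R η : ℝ) (hσ : 0 < σ) (hR : 0 < R) (hη : η ∈ Set.Ioo (0 : ℝ) 1)
    (C : Finset (Fin n → ℝ)) (hcard : (C.card : ℝ) ≤ 2 ^ R)
    (x : Fin n → ℝ) (N : Ω → Fin n → ℝ) (hNmeas : Measurable N)
    (hN : Measure.map N P = Measure.pi fun _ : Fin n => gaussianReal 0 (σ ^ 2).toNNReal)
    (xhat : Ω → Fin n → ℝ) (hhatmem : ∀ ω, xhat ω ∈ C)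
    (hhatmin : ∀ ω, ∀ c ∈ C,
      ∑ i, (xhat ω i - (x i + N ω i)) ^ 2 ≤ ∑ i, (c i - (x i + N ω i)) ^ 2)
    (xtil : Fin n → ℝ) (htilmem : xtil ∈ C)
    (htilmin : ∀ c ∈ C, ∑ i, (xtil i - x i) ^ 2 ≤ ∑ i, (c i - x i) ^ 2) :
    ENNReal.ofReal (1 - (2 : ℝ) ^ (-η * R + 2)) ≤
      P {ω | Real.sqrt (∑ i, (xtil i - x i) ^ 2) ≤ Real.sqrt (∑ i, (x i - xhat ω i) ^ 2) ∧
             Real.sqrt (∑ i, (x i - xhat ω i) ^ 2) ≤ Real.sqrt (∑ i, (xtil i - x i) ^ 2)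
               + 2 * σ * Real.sqrt (2 * Real.log 2 * R) * (1 + 2 * Real.sqrt η)} := by
  obtain ⟨hη0, -⟩ := hη
  have hconst : σ * √(2 * Real.log 2 * (R + η * R))
      ≤ σ * √(2 * Real.log 2 * R) * (1 + 2 * √η) := by
    rw [show 2 * Real.log 2 * (R + η * R) = 2 * Real.log 2 * R * (1 + η) by ring, mul_assoc σ]
    gcongr
    exact sqrt_mul_one_add_le hη0.le
  have hbad := measure_exists_inner_gt_le_two_rpow_neg hNmeas hN C
    (fun c ↦ WithLp.toLp 2 (c - xtil)) hcard hσ hR.le (by positivity : 0 ≤ η * R)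
  refine ofReal_one_sub_le_of_measure_compl_le (by positivity)
    ((measure_mono ?_).trans (hbad.trans ?_))
  · rw [Set.compl_subset_comm]
    intro ω hω
    simp only [Set.mem_compl_iff, Set.mem_ofPred_eq, not_exists, not_and, not_lt] at hω ⊢
    refine ⟨Real.sqrt_le_sqrt ((htilmin _ (hhatmem ω)).trans_eq
      (Finset.sum_congr rfl fun i _ ↦ sub_sq_comm _ _)), ?_⟩
    have := sqrt_sum_sub_sq_le_add_two_mul_of_inner_le (by positivity) (hhatmin ω xtil htilmem)
      (hω _ (hhatmem ω))
    linarith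
  · exact ENNReal.ofReal_le_ofReal (Real.rpow_le_rpow_of_exponent_le one_le_two (by linarith))

/-- Compression-based ML denoising under AWGN. Let `x ∈ ℝⁿ`, `C` a codebook
with `|C| ≤ 2^R`, noise `N ~ N(0, σ²Iₙ)`, observation `y = x + N`, `x̂` the nearest codeword
to `y` and `x̃` the nearest codeword to `x`, with `D(P) = ‖x̃ − x‖²`. Then with probability
at least `1 − 2^{−ηR+2}`,
`√(D(P)) ≤ ‖x − x̂‖ ≤ √(D(P)) + 2σ√((2 ln 2)R)(1 + 2√η)`. -/
theorem stmt16 {Ω : Type*} [MeasurableSpace Ω] (P : Measure Ω) [IsProbabilityMeasure P]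
    {n : ℕ} (σ R η : ℝ) (hσ : 0 < σ) (hR : 0 < R) (hη : η ∈ Set.Ioo (0 : ℝ) 1)
    (C : Finset (Fin n → ℝ)) (hCne : C.Nonempty) (hcard : (C.card : ℝ) ≤ 2 ^ R)
    (x : Fin n → ℝ) (N : Ω → Fin n → ℝ) (hNmeas : Measurable N)
    (hN : Measure.map N P = Measure.pi fun _ : Fin n => gaussianReal 0 (σ ^ 2).toNNReal)
    (xhat : Ω → Fin n → ℝ) (hhatmem : ∀ ω, xhat ω ∈ C)
    (hhatmin : ∀ ω, ∀ c ∈ C,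
      ∑ i, (xhat ω i - (x i + N ω i)) ^ 2 ≤ ∑ i, (c i - (x i + N ω i)) ^ 2)
    (xtil : Fin n → ℝ) (htilmem : xtil ∈ C)
    (htilmin : ∀ c ∈ C, ∑ i, (xtil i - x i) ^ 2 ≤ ∑ i, (c i - x i) ^ 2) :
    ENNReal.ofReal (1 - (2 : ℝ) ^ (-η * R + 2)) ≤
      P {ω | Real.sqrt (∑ i, (xtil i - x i) ^ 2) ≤ Real.sqrt (∑ i, (x i - xhat ω i) ^ 2) ∧
             Real.sqrt (∑ i, (x i - xhat ω i) ^ 2) ≤ Real.sqrt (∑ i, (xtil i - x i) ^ 2)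
               + 2 * σ * Real.sqrt (2 * Real.log 2 * R) * (1 + 2 * Real.sqrt η)} :=
  stmt16_general P σ R η hσ hR hη C hcard x N hNmeas hN xhat hhatmem hhatmin xtil htilmem htilmin
end
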